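/- arXiv:1107.2261 — 4 statements merged into one kernel-verified Lean document; each statement's English description precedes it below -/
import Mathlib

section
/- Under the heavy-tail model and Lipschitz assumptions, if y_n → ∞ and y'_n → ∞, then for all n large enough, sup_{x' ∈ B(x,h)} |F̄(y'_n|x')/F̄(y_n|x') − 1| ≤ |(y_n/y'_n)^{2/γ(x)} − 1|. -/
open Filter Real Metric

lemma ratio_bound (g a b : ℝ) (hg : 0 < g) (ha : 0 < a) (hab : a ≤ b)
    (f : ℝ → ℝ) (hf : ContinuousOn f (Set.Icc a b))
    (h0 : ∀ u ∈ Set.Icc a b, 0 ≤ f u)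
    (h2 : ∀ u ∈ Set.Icc a b, f u ≤ 2 * g / u) :
    |Real.exp (-(∫ u in a..b, f u)) - 1| ≤ |(a / b) ^ (2 * g) - 1| ∧
    |Real.exp (∫ u in a..b, f u) - 1| ≤ |(b / a) ^ (2 * g) - 1| := by
  have hb : 0 < b := lt_of_lt_of_le ha hab
  have hIcc : Set.uIcc a b = Set.Icc a b := Set.uIcc_of_le hab
  have hint_f : IntervalIntegrable f MeasureTheory.volume a b := by
    apply ContinuousOn.intervalIntegrable; rwa [hIcc]
  have hcg : ContinuousOn (fun u : ℝ => 2 * g / u) (Set.Icc a b) := by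
    apply ContinuousOn.div continuousOn_const continuousOn_id
    intro u hu; exact ne_of_gt (lt_of_lt_of_le ha hu.1)
  have hint_g : IntervalIntegrable (fun u : ℝ => 2 * g / u) MeasureTheory.volume a b := by
    apply ContinuousOn.intervalIntegrable; rwa [hIcc]
  set I := ∫ u in a..b, f u with hI
  have hI0 : 0 ≤ I := intervalIntegral.integral_nonneg hab h0
  have hKval : (∫ u in a..b, 2 * g / u) = 2 * g * Real.log (b / a) := by
    simp_rw [div_eq_mul_inv]
    rw [intervalIntegral.integral_const_mul, integral_inv (by
      rw [hIcc]; intro hmem; exact absurd hmem.1 (not_le.mpr ha)), div_eq_mul_inv]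
  have hIK : I ≤ 2 * g * Real.log (b / a) := by
    rw [← hKval]; exact intervalIntegral.integral_mono_on hab hint_f hint_g h2
  set K := 2 * g * Real.log (b / a) with hK
  have hK0 : 0 ≤ K := by
    apply mul_nonneg (by linarith)
    exact Real.log_nonneg ((one_le_div ha).mpr hab)
  have hrpow1 : (a / b) ^ (2 * g) = Real.exp (-K) := by
    rw [Real.rpow_def_of_pos (div_pos ha hb)]
    rw [Real.log_div ha.ne' hb.ne']
    have : Real.log (b / a) = Real.log b - Real.log a := Real.log_div hb.ne' ha.ne'
    rw [hK, this]; ring_nf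
  have hrpow2 : (b / a) ^ (2 * g) = Real.exp K := by
    rw [Real.rpow_def_of_pos (div_pos hb ha)]
    rw [hK]; ring_nf
  constructor
  · rw [hrpow1]
    have e1 : Real.exp (-I) ≤ 1 := Real.exp_le_one_iff.mpr (by linarith)
    have e2 : Real.exp (-K) ≤ 1 := Real.exp_le_one_iff.mpr (by linarith)
    have e3 : Real.exp (-K) ≤ Real.exp (-I) := Real.exp_le_exp.mpr (by linarith)
    rw [abs_of_nonpos (by linarith), abs_of_nonpos (by linarith)]
    linarith
  · rw [hrpow2]
    have e1 : 1 ≤ Real.exp I := Real.one_le_exp hI0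
    have e2 : 1 ≤ Real.exp K := Real.one_le_exp hK0
    have e3 : Real.exp I ≤ Real.exp K := Real.exp_le_exp.mpr hIK
    rw [abs_of_nonneg (by linarith), abs_of_nonneg (by linarith)]
    linarith

theorem stmt_2 {E : Type*} [PseudoMetricSpace E]
    (c γ : E → ℝ) (ε : E → ℝ → ℝ) (Fbar : E → ℝ → ℝ)
    (hγpos : ∀ z, 0 < γ z) (hcpos : ∀ z, 0 < c z)
    (hεcont : ∀ z, Continuous (ε z))
    (hεdecr : ∀ z, ∃ u₁ : ℝ, AntitoneOn (fun u => |ε z u|) (Set.Ici u₁))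
    (hεlim : ∀ z, Tendsto (ε z) atTop (nhds 0))
    (hF : ∀ z, ∀ y ≥ (1:ℝ),
      Fbar z y = c z * Real.exp (-(∫ u in (1:ℝ)..y, (1/γ z - ε z u) / u)))
    (κγ κε u₀ : ℝ) (hκγ : 0 < κγ) (hκε : 0 < κε) (hu₀ : 1 < u₀)
    (hLε : ∀ z z' : E, ∀ u > u₀, |ε z u - ε z' u| ≤ κε * dist z z')
    (hLγ : ∀ z z' : E, |1/γ z - 1/γ z'| ≤ κγ * dist z z')
    (x : E) (y y' h : ℕ → ℝ)
    (hy : Tendsto y atTop atTop) (hy' : Tendsto y' atTop atTop)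
    (hh : Tendsto h atTop (nhds 0)) :
    ∀ᶠ n in atTop, ∀ x' ∈ closedBall x (h n),
      |Fbar x' (y' n) / Fbar x' (y n) - 1|
        ≤ |(y n / y' n) ^ (2 / γ x) - 1| := by
  set g := 1 / γ x with hg
  have hgpos : 0 < g := by rw [hg]; exact div_pos one_pos (hγpos x)
  set δ := g / (4 * (κγ + κε)) with hδdef
  have hδpos : 0 < δ := by positivity
  have hδsum : (κγ + κε) * δ = g / 4 := by
    rw [hδdef]; field_simp
  -- bound on ε x near infinity
  have h4 : ∀ᶠ u in atTop, |ε x u| ≤ g / 4 := by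
    have := Metric.tendsto_nhds.mp (hεlim x) (g / 4) (by positivity)
    filter_upwards [this] with u hu
    rw [Real.dist_eq, sub_zero] at hu
    exact hu.le
  obtain ⟨u₁, hu₁⟩ := eventually_atTop.mp h4
  set U := max u₁ (u₀ + 1) with hU
  have hU1 : (1:ℝ) ≤ U := le_trans (by linarith) (le_max_right _ _)
  have hU0 : 0 < U := lt_of_lt_of_le one_pos hU1
  have hhδ : ∀ᶠ n in atTop, |h n| ≤ δ := by
    have := Metric.tendsto_nhds.mp hh δ hδpos
    filter_upwards [this] with n hn
    rw [Real.dist_eq, sub_zero] at hn; exact hn.le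
  filter_upwards [hy.eventually_ge_atTop U, hy'.eventually_ge_atTop U, hhδ]
    with n hyn hy'n hhn x' hx'
  have hd : dist x' x ≤ δ := le_trans (mem_closedBall.mp hx')
    (le_trans (le_abs_self _) hhn)
  have hdx : 0 ≤ dist x' x := dist_nonneg
  -- pointwise bounds on the integrand for u ≥ U
  have key : ∀ u : ℝ, U ≤ u → g / 2 ≤ 1 / γ x' - ε x' u ∧ 1 / γ x' - ε x' u ≤ 2 * g := by
    intro u hu
    have huu₀ : u > u₀ := lt_of_lt_of_le (by linarith [le_max_right u₁ (u₀+1)]) hu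
    have e1 := hLγ x' x
    have e2 := hLε x' x u huu₀
    have e3 : |ε x u| ≤ g / 4 := hu₁ u (le_trans (le_max_left _ _) hu)
    have b1 : κγ * dist x' x ≤ κγ * δ := mul_le_mul_of_nonneg_left hd hκγ.le
    have b2 : κε * dist x' x ≤ κε * δ := mul_le_mul_of_nonneg_left hd hκε.le
    have c1 := abs_le.mp (e1.trans b1)
    have c2 := abs_le.mp (e2.trans b2)
    have c3 := abs_le.mp e3
    have hsum : κγ * δ + κε * δ = g / 4 := by rw [← hδsum]; ring
    exact ⟨by linarith [c1.1, c1.2, c2.1, c2.2, c3.1, c3.2],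
           by linarith [c1.1, c1.2, c2.1, c2.2, c3.1, c3.2]⟩
  -- the integrand
  set f : ℝ → ℝ := fun u => (1 / γ x' - ε x' u) / u with hfdef
  have hfcont : ∀ a b : ℝ, 1 ≤ a → ContinuousOn f (Set.Icc a b) := by
    intro a b ha1
    apply ContinuousOn.div
    · exact (continuous_const.sub (hεcont x')).continuousOn
    · exact continuousOn_id
    · intro u hu; exact ne_of_gt (lt_of_lt_of_le (by linarith) hu.1)
  have hy1 : (1:ℝ) ≤ y n := le_trans hU1 hyn
  have hy'1 : (1:ℝ) ≤ y' n := le_trans hU1 hy'n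
  have hint : ∀ a b : ℝ, 1 ≤ a → 1 ≤ b →
      IntervalIntegrable f MeasureTheory.volume a b := by
    intro a b ha hb
    apply ContinuousOn.intervalIntegrable
    rw [Set.uIcc]
    exact hfcont _ _ (le_min ha hb)
  -- ratio as exponential
  have hratio : Fbar x' (y' n) / Fbar x' (y n)
      = Real.exp (-(∫ u in (y n)..(y' n), f u)) := by
    rw [hF x' (y n) hy1, hF x' (y' n) hy'1]
    rw [mul_div_mul_left _ _ (hcpos x').ne', ← Real.exp_sub]
    congr 1
    have hadd : (∫ u in (1:ℝ)..(y n), f u) + (∫ u in (y n)..(y' n), f u)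
        = ∫ u in (1:ℝ)..(y' n), f u :=
      intervalIntegral.integral_add_adjacent_intervals
        (hint 1 (y n) le_rfl hy1) (hint (y n) (y' n) hy1 hy'1)
    rw [hfdef] at hadd ⊢
    linarith
  -- bounds on f on relevant intervals
  have hbnd : ∀ a b : ℝ, U ≤ a →
      (∀ u ∈ Set.Icc a b, 0 ≤ f u) ∧ (∀ u ∈ Set.Icc a b, f u ≤ 2 * g / u) := by
    intro a b haU
    constructor <;> intro u hu <;>
      have hUu : U ≤ u := le_trans haU hu.1
    · have hk := (key u hUu).1
      have hupos : 0 < u := lt_of_lt_of_le hU0 hUu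
      exact div_nonneg (by linarith) hupos.le
    · have hk := (key u hUu).2
      have hupos : 0 < u := lt_of_lt_of_le hU0 hUu
      exact (div_le_div_iff_of_pos_right hupos).mpr hk
  have hexp : 2 / γ x = 2 * g := by rw [hg]; ring
  rw [hratio, hexp]
  rcases le_total (y n) (y' n) with hle | hle
  · exact (ratio_bound g (y n) (y' n) hgpos (lt_of_lt_of_le hU0 hyn) hle f
      (hfcont _ _ hy1) (hbnd _ _ hyn).1 (hbnd _ _ hyn).2).1
  · have hsymm : (∫ u in (y n)..(y' n), f u) = -(∫ u in (y' n)..(y n), f u) :=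
      intervalIntegral.integral_symm _ _
    rw [hsymm, neg_neg]
    have := (ratio_bound g (y' n) (y n) hgpos (lt_of_lt_of_le hU0 hy'n) hle f
      (hfcont _ _ hy'1) (hbnd _ _ hy'n).1 (hbnd _ _ hy'n).2).2
    exact this
end

section
/- In the heavy-tail model with auxiliary function ε, the conditional quantile function q(·|x) (the generalized inverse of F̄(·|x)) satisfies: for sequences 0 < β_n < α_n with α_n → 0, |log q(β_n|x) − log q(α_n|x) + γ(x) log(β_n/α_n)| = O(log(α_n/β_n) · ε(q(α_n|x)|x)) as n → ∞. -/
/-!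
Since `F̄(q(a)) = a`, the identity `log (α/β) = ∫_{q(α)}^{q(β)} (1/γ - ε(u)) du/u` holds, the constant
`c` cancelling. Writing `L = log (q(β)/q(α))`, this says `L - γ log (α/β) = γ ∫_{q(α)}^{q(β)} ε(u) du/u`,
and since `|ε|` is eventually decreasing the right side is at most `γ |ε(q(α))| L` in absolute value.
Once `γ |ε(q(α))| ≤ 1/2` this gives `L ≤ 2γ log (α/β)`, hence the bound with constant `2γ²`.
-/

open Filter Real Set intervalIntegral
open MeasureTheory (volume)

lemma intervalIntegrable_div_self_of_pos {g : ℝ → ℝ} (hg : Continuous g) {a b : ℝ}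
    (ha : 0 < a) (hb : 0 < b) : IntervalIntegrable (fun u => g u / u) volume a b :=
  (hg.continuousOn.div continuousOn_id fun u hu h =>
    notMem_uIcc_of_lt ha hb (by simpa [show u = 0 from h] using hu)).intervalIntegrable

lemma log_div_eq_integral_of_eq_exp {Fbar g : ℝ → ℝ} {c A B : ℝ} (hg : Continuous g)
    (hF : ∀ y ≥ (1:ℝ), Fbar y = c * exp (-(∫ u in (1:ℝ)..y, g u / u)))
    (hA : 1 ≤ A) (hB : 1 ≤ B) (hFA : Fbar A ≠ 0) :
    log (Fbar A / Fbar B) = ∫ u in A..B, g u / u := by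
  have hc : c ≠ 0 := by rintro rfl; simp [hF A hA] at hFA
  have hsub := integral_interval_sub_left
    (intervalIntegrable_div_self_of_pos hg one_pos (by linarith : (0:ℝ) < B))
    (intervalIntegrable_div_self_of_pos hg one_pos (by linarith : (0:ℝ) < A))
  rw [hF A hA, hF B hB, mul_div_mul_left _ _ hc, ← exp_sub, log_exp, ← hsub]
  ring

lemma le_of_intervalIntegral_pos {f : ℝ → ℝ} {A B : ℝ} (hf : ∀ u ≥ B, 0 ≤ f u)
    (hI : 0 < ∫ u in A..B, f u) : A ≤ B := by
  by_contra! hBA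
  have : 0 ≤ ∫ u in B..A, f u := integral_nonneg hBA.le fun u hu => hf u hu.1
  rw [integral_symm] at this
  linarith

lemma abs_integral_div_self_le {ε : ℝ → ℝ} {δ A B : ℝ} (hA : 0 < A) (hAB : A ≤ B)
    (hεδ : ∀ u ∈ Icc A B, |ε u| ≤ δ) : |∫ u in A..B, ε u / u| ≤ δ * log (B / A) := by
  have hB : 0 < B := hA.trans_le hAB
  calc |∫ u in A..B, ε u / u| ≤ ∫ u in A..B, δ * (1 / u) := by
        rw [← Real.norm_eq_abs]
        refine norm_integral_le_of_norm_le hAB (.of_forall fun u hu => ?_)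
          ((intervalIntegrable_div_self_of_pos (g := fun _ => 1) continuous_const hA hB).const_mul δ)
        have hu0 : 0 < u := hA.trans hu.1
        rw [Real.norm_eq_abs, abs_div, abs_of_pos hu0, mul_one_div]
        exact div_le_div_of_nonneg_right (hεδ u (Ioc_subset_Icc_self hu)) hu0.le
    _ = δ * log (B / A) := by
        rw [integral_const_mul, integral_one_div (notMem_uIcc_of_lt hA hB)]

lemma abs_log_div_sub_mul_integral_le {ε : ℝ → ℝ} {γ δ A B : ℝ} (hγ : 0 < γ)
    (hε : Continuous ε) (hA : 0 < A) (hAB : A ≤ B) (hεδ : ∀ u ∈ Icc A B, |ε u| ≤ δ) :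
    |log (B / A) - γ * ∫ u in A..B, (1 / γ - ε u) / u| ≤ γ * δ * log (B / A) := by
  have hB : 0 < B := hA.trans_le hAB
  have hsplit : ∫ u in A..B, (1 / γ - ε u) / u
      = 1 / γ * log (B / A) - ∫ u in A..B, ε u / u := by
    have hfun : (fun u => (1 / γ - ε u) / u) = fun u => 1 / γ * (1 / u) - ε u / u := by
      funext u; ring
    rw [hfun, integral_sub
      ((intervalIntegrable_div_self_of_pos (g := fun _ => 1) continuous_const hA hB).const_mul _)
      (intervalIntegrable_div_self_of_pos hε hA hB), integral_const_mul,
      integral_one_div (notMem_uIcc_of_lt hA hB)]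
  rw [hsplit, show ∀ L E : ℝ, L - γ * (1 / γ * L - E) = γ * E by intro L E; field_simp; ring,
    abs_mul, abs_of_pos hγ, mul_assoc]
  exact mul_le_mul_of_nonneg_left (abs_integral_div_self_le hA hAB hεδ) hγ.le

lemma abs_log_div_sub_mul_integral_le_of_mul_le_half {ε : ℝ → ℝ} {γ δ A B : ℝ} (hγ : 0 < γ)
    (hε : Continuous ε) (hA : 0 < A) (hAB : A ≤ B) (hεδ : ∀ u ∈ Icc A B, |ε u| ≤ δ)
    (hγδ : γ * δ ≤ 1 / 2) :
    |log (B / A) - γ * ∫ u in A..B, (1 / γ - ε u) / u|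
      ≤ 2 * γ ^ 2 * ((∫ u in A..B, (1 / γ - ε u) / u) * δ) := by
  have h := abs_log_div_sub_mul_integral_le hγ hε hA hAB hεδ
  set I := ∫ u in A..B, (1 / γ - ε u) / u
  set L := log (B / A)
  have hL0 : 0 ≤ L := log_nonneg ((one_le_div hA).2 hAB)
  have hδ : 0 ≤ δ := (abs_nonneg _).trans (hεδ A ⟨le_rfl, hAB⟩)
  have hL : L ≤ 2 * γ * I := by
    linarith [le_abs_self (L - γ * I), mul_le_mul_of_nonneg_right hγδ hL0]
  calc |L - γ * I| ≤ γ * δ * L := h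
    _ ≤ γ * δ * (2 * γ * I) := mul_le_mul_of_nonneg_left hL (by positivity)
    _ = 2 * γ ^ 2 * (I * δ) := by ring

lemma abs_log_sub_log_add_mul_log_div_le {Fbar ε : ℝ → ℝ} {γ c u₁ T a b A B : ℝ}
    (hγ : 0 < γ) (hε : Continuous ε) (hu₁ : AntitoneOn (fun u => |ε u|) (Ici u₁))
    (hF : ∀ y ≥ (1:ℝ), Fbar y = c * exp (-(∫ u in (1:ℝ)..y, (1 / γ - ε u) / u)))
    (hT : ∀ u ≥ T, 1 ≤ u ∧ u₁ ≤ u ∧ γ * |ε u| ≤ 1 / 2)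
    (hb : 0 < b) (hba : b < a) (hFA : Fbar A = a) (hFB : Fbar B = b) (hA : T ≤ A) (hB : T ≤ B) :
    |log B - log A + γ * log (b / a)| ≤ 2 * γ ^ 2 * (log (a / b) * |ε A|) := by
  obtain ⟨hA1, hAu₁, hγεA⟩ := hT A hA
  have hI : log (a / b) = ∫ u in A..B, (1 / γ - ε u) / u := by
    have h := log_div_eq_integral_of_eq_exp (by fun_prop) hF hA1 (hT B hB).1
      (hFA ▸ (hb.trans hba).ne')
    rwa [hFA, hFB] at h
  have hAB : A ≤ B := by
    refine le_of_intervalIntegral_pos (fun u hu => div_nonneg ?_ (by linarith [(hT B hB).1]))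
      (hI ▸ log_pos ((one_lt_div hb).2 hba))
    have hεu : γ * ε u ≤ 1 / 2 :=
      (mul_le_mul_of_nonneg_left (le_abs_self _) hγ.le).trans (hT u (hB.trans hu)).2.2
    rw [sub_nonneg, le_div_iff₀ hγ]
    linarith
  have key := abs_log_div_sub_mul_integral_le_of_mul_le_half hγ hε (by linarith) hAB
    (fun u hu => hu₁ hAu₁ (hAu₁.trans hu.1) hu.1) hγεA
  rw [← hI] at key
  calc |log B - log A + γ * log (b / a)| = |log (B / A) - γ * log (a / b)| := by
        rw [log_div (x := B) (by linarith) (by linarith), log_div (hb.trans hba).ne' hb.ne',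
          log_div hb.ne' (hb.trans hba).ne']
        ring_nf
    _ ≤ _ := key

theorem stmt_3_general (γ c : ℝ) (hγ : 0 < γ)
    (ε : ℝ → ℝ) (hε_cont : Continuous ε)
    (hε_decr : ∃ u₁ : ℝ, AntitoneOn (fun u => |ε u|) (Set.Ici u₁))
    (hε_lim : Tendsto ε atTop (nhds 0))
    (Fbar : ℝ → ℝ)
    (hF : ∀ y ≥ (1:ℝ), Fbar y = c * Real.exp (-(∫ u in (1:ℝ)..y, (1/γ - ε u) / u)))
    (q : ℝ → ℝ) (α₀ : ℝ) (hα₀ : 0 < α₀)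
    (hq : ∀ a ∈ Set.Ioo (0:ℝ) α₀, Fbar (q a) = a)
    (hq_top : Tendsto q (nhdsWithin 0 (Set.Ioi 0)) atTop)
    (α β : ℕ → ℝ)
    (hαβ : ∀ n, 0 < β n ∧ β n < α n)
    (hα0 : Tendsto α atTop (nhds 0)) :
    ∃ C > (0:ℝ), ∀ᶠ n in atTop,
      |Real.log (q (β n)) - Real.log (q (α n)) + γ * Real.log (β n / α n)|
        ≤ C * (Real.log (α n / β n) * |ε (q (α n))|) := by
  obtain ⟨u₁, hu₁⟩ := hε_decr
  have hγε : Tendsto (fun u => γ * |ε u|) atTop (nhds 0) := by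
    simpa using hε_lim.abs.const_mul γ
  obtain ⟨T, hT⟩ := eventually_atTop.mp ((eventually_ge_atTop 1).and
    ((eventually_ge_atTop u₁).and (hγε.eventually (ge_mem_nhds (by norm_num : (0:ℝ) < 1 / 2)))))
  have hα : Tendsto α atTop (nhdsWithin 0 (Ioi 0)) :=
    tendsto_nhdsWithin_iff.2 ⟨hα0, .of_forall fun n => (hαβ n).1.trans (hαβ n).2⟩
  have hβ : Tendsto β atTop (nhdsWithin 0 (Ioi 0)) :=
    tendsto_nhdsWithin_iff.2 ⟨squeeze_zero (fun n => (hαβ n).1.le) (fun n => (hαβ n).2.le) hα0,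
      .of_forall fun n => (hαβ n).1⟩
  refine ⟨2 * γ ^ 2, by positivity, ?_⟩
  filter_upwards [hα0.eventually (gt_mem_nhds hα₀), (hq_top.comp hα).eventually_ge_atTop T,
    (hq_top.comp hβ).eventually_ge_atTop T] with n hαn hA hB
  obtain ⟨hβ0, hβα⟩ := hαβ n
  exact abs_log_sub_log_add_mul_log_div_le hγ hε_cont hu₁ hF hT hβ0 hβα
    (hq _ ⟨hβ0.trans hβα, hαn⟩) (hq _ ⟨hβ0, hβα.trans hαn⟩) hA hB

theorem stmt_3 (γ c : ℝ) (hγ : 0 < γ) (hc : 0 < c)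
    (ε : ℝ → ℝ) (hε_cont : Continuous ε)
    (hε_decr : ∃ u₁ : ℝ, AntitoneOn (fun u => |ε u|) (Set.Ici u₁))
    (hε_lim : Tendsto ε atTop (nhds 0))
    (Fbar : ℝ → ℝ)
    (hF : ∀ y ≥ (1:ℝ), Fbar y = c * Real.exp (-(∫ u in (1:ℝ)..y, (1/γ - ε u) / u)))
    (q : ℝ → ℝ) (α₀ : ℝ) (hα₀ : 0 < α₀)
    (hq : ∀ a ∈ Set.Ioo (0:ℝ) α₀, Fbar (q a) = a)
    (hq_top : Tendsto q (nhdsWithin 0 (Set.Ioi 0)) atTop)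
    (α β : ℕ → ℝ)
    (hαβ : ∀ n, 0 < β n ∧ β n < α n)
    (hα0 : Tendsto α atTop (nhds 0)) (hαpos : ∀ n, 0 < α n) :
    ∃ C > (0:ℝ), ∀ᶠ n in atTop,
      |Real.log (q (β n)) - Real.log (q (α n)) + γ * Real.log (β n / α n)|
        ≤ C * (Real.log (α n / β n) * |ε (q (α n))|) :=
  stmt_3_general γ c hγ ε hε_cont hε_decr hε_lim Fbar hF q α₀ hα₀ hq hq_top α β hαβ hα0
end

section
/- With ĝ_n(x) as above, if the bandwidths h_n satisfy φ_x(h_n) → 0 and n φ_x(h_n) → ∞ as n → ∞, then ĝ_n(x) converges to 1 in probability. -/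
open Filter Real Metric MeasureTheory ProbabilityTheory Finset

open scoped Topology

/-!
The estimator is a normalized sum of `n` i.i.d. copies of `Y = K(d(x, X)/h)`, normalized so that
its mean is `1`. Since `0 ≤ Y ≤ C₂`, `Var Y ≤ E[Y²] ≤ C₂ E[Y]`, so the normalized sum has variance
at most `C₂ / (n E[Y])`. Markov's inequality gives `E[Y] ≥ C₁ φ_x(h)`, so the variance is
`O(1 / (n φ_x(h)))`, which tends to `0`; Chebyshev's inequality concludes.
-/

section Chebyshev

variable {Ω ι : Type*} [MeasurableSpace Ω] {P : Measure Ω} [IsFiniteMeasure P]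

lemma tendsto_measureReal_abs_sub_ge_of_tendsto_variance {l : Filter ι} {Z : ι → Ω → ℝ}
    {c δ : ℝ} (hδ : 0 < δ) (hZ : ∀ᶠ i in l, MemLp (Z i) 2 P) (hmean : ∀ᶠ i in l, P[Z i] = c)
    (hvar : Tendsto (fun i => variance (Z i) P) l (𝓝 0)) :
    Tendsto (fun i => P.real {ω | δ ≤ |Z i ω - c|}) l (𝓝 0) := by
  have hbound : Tendsto (fun i => variance (Z i) P / δ ^ 2) l (𝓝 0) := by
    simpa using hvar.div_const (δ ^ 2)
  refine squeeze_zero' (Eventually.of_forall fun _ => measureReal_nonneg) ?_ hbound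
  filter_upwards [hZ, hmean] with i hZi hmeani
  rw [← hmeani]
  exact ENNReal.toReal_le_of_le_ofReal (div_nonneg (variance_nonneg _ _) (sq_nonneg _))
    (meas_ge_le_variance_div_sq hZi hδ)

end Chebyshev

section SampleSum

variable {Ω E : Type*} [MeasurableSpace Ω] [MeasurableSpace E] {P : Measure Ω} {X : Ω → E}
  {Xs : ℕ → Ω → E} {f : E → ℝ} {C : ℝ}

lemma variance_le_mul_integral_of_nonneg_of_le [IsProbabilityMeasure P] {Y : Ω → ℝ}
    (hY : AEStronglyMeasurable Y P) (hY0 : ∀ ω, 0 ≤ Y ω) (hYC : ∀ ω, Y ω ≤ C) :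
    variance Y P ≤ C * ∫ ω, Y ω ∂P := by
  have hYmem : MemLp Y 2 P :=
    MemLp.of_bound hY C (Eventually.of_forall fun ω => by
      rw [Real.norm_eq_abs, abs_of_nonneg (hY0 ω)]; exact hYC ω)
  calc variance Y P ≤ ∫ ω, Y ω ^ 2 ∂P := variance_le_expectation_sq hY
    _ ≤ ∫ ω, C * Y ω ∂P := by
      refine integral_mono hYmem.integrable_sq ((hYmem.integrable one_le_two).const_mul C) ?_
      intro ω
      nlinarith [hY0 ω, hYC ω]
    _ = C * ∫ ω, Y ω ∂P := integral_const_mul C _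

lemma memLp_comp_of_nonneg_of_le [IsFiniteMeasure P] {Y : Ω → E} (hY : AEMeasurable Y P)
    (hf : Measurable f) (hf0 : ∀ e, 0 ≤ f e) (hfC : ∀ e, f e ≤ C) : MemLp (fun ω => f (Y ω)) 2 P :=
  MemLp.of_bound (hf.comp_aemeasurable hY).aestronglyMeasurable C
    (Eventually.of_forall fun ω => by
      rw [Real.norm_eq_abs, abs_of_nonneg (hf0 _)]; exact hfC _)

lemma integral_sum_comp_of_identDistrib (hident : ∀ i, IdentDistrib (Xs i) X P P)
    (hf : Measurable f) (hfX : Integrable (fun ω => f (X ω)) P) (n : ℕ) :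
    ∫ ω, ∑ i ∈ range n, f (Xs i ω) ∂P = n * ∫ ω, f (X ω) ∂P := by
  have hcomp : ∀ i, IdentDistrib (fun ω => f (Xs i ω)) (fun ω => f (X ω)) P P :=
    fun i => (hident i).comp hf
  rw [integral_finsetSum _ fun i _ => (hcomp i).integrable_iff.mpr hfX]
  simp [(hcomp _).integral_eq]

lemma variance_sum_comp_le_of_iIndepFun [IsProbabilityMeasure P] (hindep : iIndepFun Xs P)
    (hident : ∀ i, IdentDistrib (Xs i) X P P) (hf : Measurable f)
    (hf0 : ∀ e, 0 ≤ f e) (hfC : ∀ e, f e ≤ C) (n : ℕ) :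
    variance (fun ω => ∑ i ∈ range n, f (Xs i ω)) P ≤ n * (C * ∫ ω, f (X ω) ∂P) := by
  have hmem : ∀ i, MemLp (fun ω => f (Xs i ω)) 2 P := fun i =>
    memLp_comp_of_nonneg_of_le (hident i).aemeasurable_fst hf hf0 hfC
  have hvar_sum : variance (fun ω => ∑ i ∈ range n, f (Xs i ω)) P
      = ∑ i ∈ range n, variance (fun ω => f (Xs i ω)) P := by
    rw [← IndepFun.variance_sum (fun i _ => hmem i)
      fun i _ j _ hij => (hindep.indepFun hij).comp hf hf]
    congr 1
    ext ω
    simp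
  have hvar_le : ∀ i, variance (fun ω => f (Xs i ω)) P ≤ C * ∫ ω, f (X ω) ∂P := fun i => by
    have hmean := ((hident i).comp hf).integral_eq
    simp only [Function.comp_def] at hmean
    rw [← hmean]
    exact variance_le_mul_integral_of_nonneg_of_le (hmem i).1 (fun _ => hf0 _) fun _ => hfC _
  calc variance (fun ω => ∑ i ∈ range n, f (Xs i ω)) P
      ≤ ∑ _i ∈ range n, C * ∫ ω, f (X ω) ∂P := hvar_sum ▸ sum_le_sum fun i _ => hvar_le i
    _ = n * (C * ∫ ω, f (X ω) ∂P) := by simp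

lemma integral_normalized_sum_comp (hident : ∀ i, IdentDistrib (Xs i) X P P) (hf : Measurable f)
    (hfX : Integrable (fun ω => f (X ω)) P) (hm : ∫ ω, f (X ω) ∂P ≠ 0) {n : ℕ} (hn : n ≠ 0) :
    ∫ ω, 1 / (n * ∫ ω, f (X ω) ∂P) * ∑ i ∈ range n, f (Xs i ω) ∂P = 1 := by
  rw [integral_const_mul, integral_sum_comp_of_identDistrib hident hf hfX]
  field_simp

lemma variance_normalized_sum_comp_le [IsProbabilityMeasure P] (hindep : iIndepFun Xs P)
    (hident : ∀ i, IdentDistrib (Xs i) X P P) (hf : Measurable f)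
    (hf0 : ∀ e, 0 ≤ f e) (hfC : ∀ e, f e ≤ C) (hm : 0 < ∫ ω, f (X ω) ∂P) (n : ℕ) :
    variance (fun ω => 1 / (n * ∫ ω, f (X ω) ∂P) * ∑ i ∈ range n, f (Xs i ω)) P
      ≤ C / (n * ∫ ω, f (X ω) ∂P) := by
  rw [variance_const_mul]
  calc (1 / (n * ∫ ω, f (X ω) ∂P)) ^ 2 * variance (fun ω => ∑ i ∈ range n, f (Xs i ω)) P
      ≤ (1 / (n * ∫ ω, f (X ω) ∂P)) ^ 2 * (n * (C * ∫ ω, f (X ω) ∂P)) := by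
        gcongr
        exact variance_sum_comp_le_of_iIndepFun hindep hident hf hf0 hfC n
    _ = C / (n * ∫ ω, f (X ω) ∂P) := by
        rcases eq_or_ne n 0 with rfl | hn
        · simp
        · field_simp

lemma variance_normalized_sum_comp_le_of_le_integral [IsProbabilityMeasure P]
    (hindep : iIndepFun Xs P) (hident : ∀ i, IdentDistrib (Xs i) X P P) (hf : Measurable f)
    (hf0 : ∀ e, 0 ≤ f e) (hfC : ∀ e, f e ≤ C) {c : ℝ} (hc : 0 < c) (hcm : c ≤ ∫ ω, f (X ω) ∂P)
    (n : ℕ) :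
    variance (fun ω => 1 / (n * ∫ ω, f (X ω) ∂P) * ∑ i ∈ range n, f (Xs i ω)) P
      ≤ C / (n * c) := by
  refine (variance_normalized_sum_comp_le hindep hident hf hf0 hfC (hc.trans_le hcm) n).trans ?_
  rcases Nat.eq_zero_or_pos n with rfl | hn
  · simp
  obtain ⟨ω⟩ := nonempty_of_isProbabilityMeasure P
  have hC : 0 ≤ C := (hf0 (X ω)).trans (hfC _)
  gcongr

end SampleSum

lemma mul_measureReal_le_integral_kernel {Ω E : Type*} [MeasurableSpace Ω] [PseudoMetricSpace E]
    {P : Measure Ω} [IsFiniteMeasure P] {X : Ω → E} {x : E} {K : ℝ → ℝ} {C₁ h : ℝ}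
    (hC₁ : 0 ≤ C₁) (hh : 0 < h) (hK0 : ∀ t, 0 ≤ K t) (hK : ∀ t ∈ Set.Icc (0 : ℝ) 1, C₁ ≤ K t)
    (hint : Integrable (fun ω => K (dist x (X ω) / h)) P) :
    C₁ * P.real {ω | dist x (X ω) ≤ h} ≤ ∫ ω, K (dist x (X ω) / h) ∂P := by
  have hsub : {ω | dist x (X ω) ≤ h} ⊆ {ω | C₁ ≤ K (dist x (X ω) / h)} := fun ω hω =>
    hK _ ⟨div_nonneg dist_nonneg hh.le, div_le_one_of_le₀ hω hh.le⟩
  calc C₁ * P.real {ω | dist x (X ω) ≤ h}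
      ≤ C₁ * P.real {ω | C₁ ≤ K (dist x (X ω) / h)} :=
        mul_le_mul_of_nonneg_left (measureReal_mono hsub (measure_ne_top P _)) hC₁
    _ ≤ ∫ ω, K (dist x (X ω) / h) ∂P :=
        mul_meas_ge_le_integral_of_nonneg (Eventually.of_forall fun _ => hK0 _) hint C₁

theorem stmt_10_general {E : Type*} [PseudoMetricSpace E] [MeasurableSpace E] [BorelSpace E]
    {Ω : Type*} [MeasurableSpace Ω] (P : Measure Ω) [IsProbabilityMeasure P]
    (X : Ω → E)
    (Xs : ℕ → Ω → E)
    (hindep : iIndepFun Xs P)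
    (hident : ∀ i, IdentDistrib (Xs i) X P P)
    (x : E) (K : ℝ → ℝ) (C₁ C₂ : ℝ) (hC₁ : 0 < C₁) (hC₁₂ : C₁ < C₂)
    (hKnonneg : ∀ t, 0 ≤ K t)
    (hKbound : ∀ t ∈ Set.Icc (0:ℝ) 1, C₁ ≤ K t ∧ K t ≤ C₂)
    (hKsupp : ∀ t, t ∉ Set.Icc (0:ℝ) 1 → K t = 0)
    (hKmeas : Measurable K)
    (h : ℕ → ℝ) (hhpos : ∀ n, 0 < h n)
    (φ : ℕ → ℝ) (hφ : ∀ n, φ n = (P {ω | dist x (X ω) ≤ h n}).toReal)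
    (hφpos : ∀ n, 0 < φ n)
    (μ₁ : ℕ → ℝ) (hμ₁ : ∀ n, μ₁ n = ∫ ω, K (dist x (X ω) / h n) ∂P)
    (g : ℕ → Ω → ℝ)
    (hg : ∀ n ω, g n ω = (1 / ((n : ℝ) * μ₁ n)) *
      ∑ i ∈ Finset.range n, K (dist x (Xs i ω) / h n))
    (hnφ : Tendsto (fun n : ℕ => (n : ℝ) * φ n) atTop atTop) :
    ∀ δ > (0:ℝ),
      Tendsto (fun n : ℕ => (P {ω | δ ≤ |g n ω - 1|}).toReal) atTop (nhds 0) := by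
  intro δ hδ
  have hK_le : ∀ t, K t ≤ C₂ := fun t => by
    by_cases ht : t ∈ Set.Icc (0:ℝ) 1
    · exact (hKbound t ht).2
    · rw [hKsupp t ht]; exact (hC₁.trans hC₁₂).le
  have hf : ∀ n, Measurable fun e : E => K (dist x e / h n) := fun n =>
    hKmeas.comp ((continuous_const.dist continuous_id).measurable.div_const _)
  have hmem : ∀ n (Y : Ω → E), AEMeasurable Y P → MemLp (fun ω => K (dist x (Y ω) / h n)) 2 P :=
    fun n _ hY => memLp_comp_of_nonneg_of_le (f := fun e => K (dist x e / h n)) hY (hf n)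
      (fun _ => hKnonneg _) (fun _ => hK_le _)
  have hint : ∀ n, Integrable (fun ω => K (dist x (X ω) / h n)) P := fun n =>
    (hmem n X (hident 0).aemeasurable_snd).integrable one_le_two
  have hμ₁_ge : ∀ n, C₁ * φ n ≤ ∫ ω, K (dist x (X ω) / h n) ∂P := fun n =>
    hφ n ▸ mul_measureReal_le_integral_kernel hC₁.le (hhpos n) hKnonneg
      (fun t ht => (hKbound t ht).1) (hint n)
  have hg_eq : ∀ n, g n = fun ω => 1 / (n * ∫ ω, K (dist x (X ω) / h n) ∂P) *
      ∑ i ∈ range n, K (dist x (Xs i ω) / h n) := fun n => funext fun ω => by rw [hg, hμ₁]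
  refine tendsto_measureReal_abs_sub_ge_of_tendsto_variance hδ
    (Eventually.of_forall fun n => hg_eq n ▸
      (memLp_finsetSum _ fun i _ => hmem n _ (hident i).aemeasurable_fst).const_mul _)
    ((eventually_ne_atTop 0).mono fun n hn => hg_eq n ▸ integral_normalized_sum_comp hident
      (hf n) (hint n) ((mul_pos hC₁ (hφpos n)).trans_le (hμ₁_ge n)).ne' hn) ?_
  refine squeeze_zero (fun n => variance_nonneg _ _) (fun n => hg_eq n ▸
    variance_normalized_sum_comp_le_of_le_integral hindep hident (hf n) (fun _ => hKnonneg _)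
      (fun _ => hK_le _) (mul_pos hC₁ (hφpos n)) (hμ₁_ge n) n) ?_
  simpa [div_eq_mul_inv, mul_left_comm] using
    ((hnφ.const_mul_atTop hC₁).inv_tendsto_atTop).const_mul C₂

theorem stmt_10 {E : Type*} [PseudoMetricSpace E] [MeasurableSpace E] [BorelSpace E]
    {Ω : Type*} [MeasurableSpace Ω] (P : Measure Ω) [IsProbabilityMeasure P]
    (X : Ω → E) (hX : Measurable X)
    (Xs : ℕ → Ω → E) (hXs : ∀ i, Measurable (Xs i))
    (hindep : iIndepFun Xs P)
    (hident : ∀ i, IdentDistrib (Xs i) X P P)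
    (x : E) (K : ℝ → ℝ) (C₁ C₂ : ℝ) (hC₁ : 0 < C₁) (hC₁₂ : C₁ < C₂)
    (hKnonneg : ∀ t, 0 ≤ K t)
    (hKbound : ∀ t ∈ Set.Icc (0:ℝ) 1, C₁ ≤ K t ∧ K t ≤ C₂)
    (hKsupp : ∀ t, t ∉ Set.Icc (0:ℝ) 1 → K t = 0)
    (hKmeas : Measurable K)
    (h : ℕ → ℝ) (hhpos : ∀ n, 0 < h n)
    (φ : ℕ → ℝ) (hφ : ∀ n, φ n = (P {ω | dist x (X ω) ≤ h n}).toReal)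
    (hφpos : ∀ n, 0 < φ n)
    (μ₁ : ℕ → ℝ) (hμ₁ : ∀ n, μ₁ n = ∫ ω, K (dist x (X ω) / h n) ∂P)
    (g : ℕ → Ω → ℝ)
    (hg : ∀ n ω, g n ω = (1 / ((n : ℝ) * μ₁ n)) *
      ∑ i ∈ Finset.range n, K (dist x (Xs i ω) / h n))
    (hφ0 : Tendsto φ atTop (nhds 0))
    (hnφ : Tendsto (fun n : ℕ => (n : ℝ) * φ n) atTop atTop) :
    ∀ δ > (0:ℝ),
      Tendsto (fun n : ℕ => (P {ω | δ ≤ |g n ω - 1|}).toReal) atTop (nhds 0) :=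
  stmt_10_general P X Xs hindep hident x K C₁ C₂ hC₁ hC₁₂ hKnonneg hKbound hKsupp hKmeas h hhpos φ
    hφ hφpos μ₁ hμ₁ g hg hnφ
end

section
/- In the heavy-tail model, for a kernel Q' that is a probability density supported on [−1,1] with cdf Q, the smoothed conditional survival satisfies: E[Q((Y − y_n)/λ) | X = x'] = F̄(y_n|x') + ∫_{−1}^{1} Q'(u)(F̄(y_n + λu|x') − F̄(y_n|x')) du, and if λ/y_n → 0, sup_{x' ∈ B(x,h)} |∫_{−1}^{1} Q'(u)(F̄(y_n+λu|x')/F̄(y_n|x') − 1) du| = O(λ/y_n). -/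
/-! Fubini turns the expectation of `Q ((W - a) / l)` into `∫ Q'(s) F̄(a + l s) ds`, and
`∫ Q' = 1` splits off `F̄(a)`. For the second claim, the exponential representation gives
`F̄(a + v) / F̄(a) = exp (-∫_a^{a+v} (1/γ - ε)(s) / s ds)`. The Lipschitz conditions bound
`|1/γ(x') - ε(s|x')|` by a constant uniformly for `x'` near `x` and `s` large, so the exponent is
`O(|v| / a)`, and `|e^z - 1| ≤ 2|z|` gives the bound `O(λ / y_n)`, which survives averaging
against the density `Q'`. -/

open Filter Real Metric MeasureTheory Set Topology

theorem integral_eq_intervalIntegral_of_forall_compl_eq_zero {f : ℝ → ℝ} {a b : ℝ}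
    (hab : a ≤ b) (hf : ∀ t ∉ Icc a b, f t = 0) : ∫ t, f t = ∫ t in a..b, f t := by
  rw [intervalIntegral.integral_of_le hab, ← integral_Icc_eq_integral_Ioc,
    setIntegral_eq_integral_of_forall_compl_eq_zero hf]

theorem integral_mul_eq_add_intervalIntegral_mul_sub {q F : ℝ → ℝ}
    (hq_supp : ∀ t ∉ Icc (-1 : ℝ) 1, q t = 0) (hq_one : ∫ t, q t = 1)
    (hqF : IntervalIntegrable (fun u => q u * F u) volume (-1) 1) (b : ℝ) :
    ∫ u, q u * F u = b + ∫ u in (-1 : ℝ)..1, q u * (F u - b) := by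
  have hq : IntervalIntegrable q volume (-1) 1 :=
    (Integrable.of_integral_ne_zero (by rw [hq_one]; exact one_ne_zero)).intervalIntegrable
  have hq_one' : ∫ u in (-1 : ℝ)..1, q u = 1 := by
    rw [← integral_eq_intervalIntegral_of_forall_compl_eq_zero (by norm_num) hq_supp, hq_one]
  simp only [mul_sub]
  rw [integral_eq_intervalIntegral_of_forall_compl_eq_zero (by norm_num : (-1 : ℝ) ≤ 1)
      (fun t ht => by rw [hq_supp t ht, zero_mul]),
    intervalIntegral.integral_sub hqF (hq.mul_const b), intervalIntegral.integral_mul_const,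
    hq_one']
  ring

theorem measurable_measureReal_lt {Ω : Type*} [MeasurableSpace Ω] (P : Measure Ω)
    [IsFiniteMeasure P] (W : Ω → ℝ) : Measurable fun t => P.real {ω | t < W ω} :=
  Antitone.measurable fun _ _ hst => measureReal_mono fun _ hω => lt_of_le_of_lt hst hω

theorem integral_setIntegral_Iic_div_eq_integral_mul_measureReal {Ω : Type*} [MeasurableSpace Ω]
    (P : Measure Ω) [IsFiniteMeasure P] {W : Ω → ℝ} (hW : Measurable W) {q : ℝ → ℝ}
    (hq : Integrable q) (a : ℝ) {l : ℝ} (hl : 0 < l) :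
    ∫ ω, (∫ s in Iic ((W ω - a) / l), q s) ∂P =
      ∫ s, q s * P.real {ω | a + l * s < W ω} := by
  set S := {p : Ω × ℝ | a + l * p.2 < W p.1}
  have hS : MeasurableSet S :=
    measurableSet_lt (measurable_const.add (measurable_snd.const_mul l)) (hW.comp measurable_fst)
  have hIio : ∀ ω, Iio ((W ω - a) / l) = {s | a + l * s < W ω} := fun ω => by
    ext s; rw [mem_Iio, lt_div_iff₀ hl, mem_ofPred_eq]; constructor <;> intro <;> linarith
  calc ∫ ω, (∫ s in Iic ((W ω - a) / l), q s) ∂P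
      = ∫ ω, (∫ s, S.indicator (fun p => q p.2) (ω, s)) ∂P := by
        refine integral_congr_ae (Eventually.of_forall fun ω => ?_)
        dsimp only
        rw [integral_Iic_eq_integral_Iio, ← integral_indicator measurableSet_Iio, hIio]
        rfl
    _ = ∫ s, (∫ ω, S.indicator (fun p => q p.2) (ω, s) ∂P) :=
        integral_integral_swap (f := fun ω s => S.indicator (fun p => q p.2) (ω, s))
          ((hq.comp_snd P).indicator hS)
    _ = ∫ s, q s * P.real {ω | a + l * s < W ω} := by
        refine integral_congr_ae (Eventually.of_forall fun s => ?_)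
        dsimp only
        rw [mul_comm, ← smul_eq_mul,
          ← integral_indicator_const _ (measurableSet_lt measurable_const hW)]
        rfl

theorem integral_kernel_cdf_comp_eq {Ω : Type*} [MeasurableSpace Ω] (P : Measure Ω)
    [IsFiniteMeasure P] {W : Ω → ℝ} (hW : Measurable W) {q Q : ℝ → ℝ}
    (hq_supp : ∀ t ∉ Icc (-1 : ℝ) 1, q t = 0) (hq_one : ∫ t, q t = 1)
    (hQ : ∀ t, Q t = ∫ s in Iic t, q s) (a : ℝ) {l : ℝ} (hl : 0 < l) :
    ∫ ω, Q ((W ω - a) / l) ∂P = P.real {ω | a < W ω} +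
      ∫ u in (-1 : ℝ)..1, q u * (P.real {ω | a + l * u < W ω} - P.real {ω | a < W ω}) := by
  have hq : Integrable q := Integrable.of_integral_ne_zero (by rw [hq_one]; exact one_ne_zero)
  have hqF : Integrable fun u => q u * P.real {ω | a + l * u < W ω} := by
    have hF : Measurable fun u => P.real {ω | a + l * u < W ω} :=
      (measurable_measureReal_lt P W).comp (by fun_prop)
    simpa only [mul_comm (q _)] using hq.bdd_mul (c := P.real univ) hF.aestronglyMeasurable
      (Eventually.of_forall fun u => by
        rw [Real.norm_of_nonneg measureReal_nonneg]; exact measureReal_mono (subset_univ _))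
  simp_rw [hQ]
  rw [integral_setIntegral_Iic_div_eq_integral_mul_measureReal P hW hq a hl]
  exact integral_mul_eq_add_intervalIntegral_mul_sub hq_supp hq_one hqF.intervalIntegrable _

theorem abs_intervalIntegral_mul_le {q r : ℝ → ℝ} {a b B : ℝ} (hab : a ≤ b)
    (hq0 : ∀ u, 0 ≤ q u) (hq : IntervalIntegrable q volume a b)
    (hr : ∀ u ∈ Icc a b, |r u| ≤ B) :
    |∫ u in a..b, q u * r u| ≤ B * ∫ u in a..b, q u := by
  rw [← intervalIntegral.integral_const_mul B q]
  refine intervalIntegral.norm_integral_le_of_norm_le (f := fun u => q u * r u) hab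
    (Eventually.of_forall fun u hu => ?_) (hq.const_mul B)
  rw [Real.norm_eq_abs, abs_mul, abs_of_nonneg (hq0 u), mul_comm B]
  exact mul_le_mul_of_nonneg_left (hr u (Ioc_subset_Icc_self hu)) (hq0 u)

section ExponentialRepresentation

variable {F g : ℝ → ℝ} {c : ℝ}

theorem div_eq_exp_neg_intervalIntegral
    (hF : ∀ t ≥ 1, F t = c * exp (-∫ u in (1 : ℝ)..t, g u)) (hc : c ≠ 0)
    (hg : ContinuousOn g (Ici 1)) {a t : ℝ} (ha : 1 ≤ a) (ht : 1 ≤ t) :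
    F t / F a = exp (-∫ u in a..t, g u) := by
  have hint : ∀ {p q : ℝ}, 1 ≤ p → 1 ≤ q → IntervalIntegrable g volume p q :=
    fun hp hq => (hg.mono fun s hs => le_trans (le_min hp hq) hs.1).intervalIntegrable
  rw [hF t ht, hF a ha, mul_div_mul_left _ _ hc, ← exp_sub,
    ← intervalIntegral.integral_add_adjacent_intervals (hint le_rfl ha) (hint ha ht)]
  ring_nf

theorem abs_div_sub_one_le (hF : ∀ t ≥ 1, F t = c * exp (-∫ u in (1 : ℝ)..t, g u))
    (hc : c ≠ 0) (hg : ContinuousOn g (Ici 1)) {a t M : ℝ} (ha : 1 ≤ a) (ht : 1 ≤ t)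
    (hM : ∀ s ∈ uIcc a t, |g s| ≤ M) (hMt : M * |t - a| ≤ 1) :
    |F t / F a - 1| ≤ 2 * (M * |t - a|) := by
  have hI : |-∫ u in a..t, g u| ≤ M * |t - a| := by
    rw [abs_neg]
    exact intervalIntegral.norm_integral_le_of_norm_le_const (f := g)
      fun s hs => hM s (uIoc_subset_uIcc hs)
  rw [div_eq_exp_neg_intervalIntegral hF hc hg ha ht]
  exact (abs_exp_sub_one_le (hI.trans hMt)).trans (by gcongr)

end ExponentialRepresentation

theorem abs_div_sub_one_le_of_abs_le {F φ : ℝ → ℝ} {c : ℝ}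
    (hF : ∀ t ≥ 1, F t = c * exp (-∫ u in (1 : ℝ)..t, φ u / u)) (hc : c ≠ 0)
    (hφ : Continuous φ) {K b a v : ℝ} (hb : 1 ≤ b) (hK : ∀ s ≥ b, |φ s| ≤ K)
    (ha : 2 * b ≤ a) (hv : |v| ≤ a / 2) (hKv : 2 * K * |v| ≤ a) :
    |F (a + v) / F a - 1| ≤ 4 * K * (|v| / a) := by
  have ha0 : 0 < a := by linarith
  have hv' := abs_le.mp hv
  have hM : ∀ s ∈ uIcc a (a + v), |φ s / s| ≤ 2 * K / a := fun s hs => by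
    have hs : a / 2 ≤ s := by
      rcases le_total a (a + v) with h | h
      · rw [uIcc_of_le h] at hs; linarith [hs.1]
      · rw [uIcc_of_ge h] at hs; linarith [hs.1]
    rw [abs_div, abs_of_pos (show 0 < s by linarith), div_le_div_iff₀ (by linarith) ha0]
    nlinarith [hK s (by linarith), abs_nonneg (φ s)]
  have hφ' : ContinuousOn (fun s => φ s / s) (Ici 1) :=
    hφ.continuousOn.div continuousOn_id fun s hs => (zero_lt_one.trans_le hs).ne'
  have key := abs_div_sub_one_le hF hc hφ' (by linarith) (by linarith) hM (by
    rw [add_sub_cancel_left, div_mul_eq_mul_div, div_le_one ha0]; exact hKv)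
  rw [add_sub_cancel_left] at key
  exact key.trans_eq (by ring)

section HeavyTailModel

variable {E : Type*} [PseudoMetricSpace E] {γ : E → ℝ} {ε : E → ℝ → ℝ} {κγ κε u₀ : ℝ}

theorem abs_le_abs_add_of_abs_sub_le_mul_dist {θ : E → ℝ}
    {κ : ℝ} {z z' : E} (hκ : 0 ≤ κ) (hθ : |θ z - θ z'| ≤ κ * dist z z')
    (hd : dist z z' ≤ 1) :
    |θ z'| ≤ |θ z| + κ := by
  have := abs_sub_abs_le_abs_sub (θ z') (θ z)
  rw [abs_sub_comm] at this
  nlinarith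

theorem exists_abs_inv_sub_le (hκγ : 0 ≤ κγ) (hκε : 0 ≤ κε)
    (hLε : ∀ z z' : E, ∀ u > u₀, |ε z u - ε z' u| ≤ κε * dist z z')
    (hLγ : ∀ z z' : E, |1 / γ z - 1 / γ z'| ≤ κγ * dist z z') {x : E}
    (hεlim : Tendsto (ε x) atTop (𝓝 0)) :
    ∃ b ≥ (1 : ℝ), ∀ x', dist x x' ≤ 1 → ∀ s ≥ b,
      |1 / γ x' - ε x' s| ≤ |1 / γ x| + κγ + 1 + κε := by
  obtain ⟨S, hS⟩ :=
    eventually_atTop.mp (hεlim.eventually (Icc_mem_nhds (neg_lt_zero.2 one_pos) one_pos))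
  refine ⟨max (max S (u₀ + 1)) 1, le_max_right _ _, fun x' hx' s hs => ?_⟩
  have hSs : S ≤ s := le_trans (le_trans (le_max_left _ _) (le_max_left _ _)) hs
  have hu₀s : u₀ < s := by
    linarith [le_trans (le_trans (le_max_right _ _) (le_max_left _ _)) hs]
  have hγ' := abs_le_abs_add_of_abs_sub_le_mul_dist (θ := fun z => 1 / γ z) hκγ (hLγ x x') hx'
  have hε' :=
    abs_le_abs_add_of_abs_sub_le_mul_dist (θ := fun z => ε z s) hκε (hLε x x' s hu₀s) hx'
  have hεx : |ε x s| ≤ 1 := abs_le.mpr (hS s hSs)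
  calc |1 / γ x' - ε x' s| ≤ |1 / γ x'| + |ε x' s| := abs_sub _ _
    _ ≤ |1 / γ x| + κγ + 1 + κε := by linarith

theorem eventually_abs_div_sub_one_le {c : E → ℝ} {Fbar : E → ℝ → ℝ}
    (hcpos : ∀ z, 0 < c z) (hεcont : ∀ z, Continuous (ε z))
    (hF : ∀ z, ∀ y ≥ (1 : ℝ), Fbar z y = c z * exp (-∫ u in (1 : ℝ)..y, (1 / γ z - ε z u) / u))
    (hκγ : 0 ≤ κγ) (hκε : 0 ≤ κε)
    (hLε : ∀ z z' : E, ∀ u > u₀, |ε z u - ε z' u| ≤ κε * dist z z')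
    (hLγ : ∀ z z' : E, |1 / γ z - 1 / γ z'| ≤ κγ * dist z z') {x : E}
    (hεlim : Tendsto (ε x) atTop (𝓝 0)) {y h lam : ℕ → ℝ}
    (hy : Tendsto y atTop atTop) (hh : Tendsto h atTop (𝓝 0)) (hlampos : ∀ n, 0 < lam n)
    (hlam : Tendsto (fun n => lam n / y n) atTop (𝓝 0)) :
    ∃ C > (0 : ℝ), ∀ᶠ n in atTop, ∀ x' ∈ closedBall x (h n), ∀ u ∈ Icc (-1 : ℝ) 1,
      |Fbar x' (y n + lam n * u) / Fbar x' (y n) - 1| ≤ C * (lam n / y n) := by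
  obtain ⟨b, hb, hK⟩ := exists_abs_inv_sub_le hκγ hκε hLε hLγ hεlim
  set K := |1 / γ x| + κγ + 1 + κε
  have hK0 : 0 < K := by positivity
  have hδ : 0 < min (1 / 2 : ℝ) (1 / (2 * K)) := by positivity
  refine ⟨4 * K, by positivity, ?_⟩
  filter_upwards [hy.eventually_ge_atTop (2 * b), hlam.eventually (Iic_mem_nhds hδ),
    hh.eventually (Iic_mem_nhds one_pos)] with n hyn hlamn hhn x' hx' u hu
  have hyn0 : 0 < y n := by linarith
  have hl := hlampos n
  have hlu : |lam n * u| ≤ lam n := by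
    rw [abs_mul, abs_of_pos hl]; exact mul_le_of_le_one_right hl.le (abs_le.mpr hu)
  have hla : lam n ≤ y n / 2 := by
    have := (div_le_iff₀ hyn0).mp (hlamn.trans (min_le_left _ _)); linarith
  have hKla : 2 * K * lam n ≤ y n := by
    have := (div_le_iff₀ hyn0).mp (hlamn.trans (min_le_right _ _))
    rwa [div_mul_eq_mul_div, le_div_iff₀ (by positivity), one_mul, mul_comm] at this
  calc |Fbar x' (y n + lam n * u) / Fbar x' (y n) - 1|
      ≤ 4 * K * (|lam n * u| / y n) :=
        abs_div_sub_one_le_of_abs_le (φ := fun s => 1 / γ x' - ε x' s) (hF x') (hcpos x').ne'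
          (continuous_const.sub (hεcont x')) hb
          (hK x' (by rw [dist_comm]; exact hx'.trans hhn)) hyn (hlu.trans hla)
          (by nlinarith)
    _ ≤ 4 * K * (lam n / y n) := by gcongr

end HeavyTailModel

theorem stmt_17_general {E : Type*} [PseudoMetricSpace E]
    {Ω : Type*} [MeasurableSpace Ω] (P : Measure Ω) [IsProbabilityMeasure P]
    (c γ : E → ℝ) (ε : E → ℝ → ℝ) (Fbar : E → ℝ → ℝ)
    (hcpos : ∀ z, 0 < c z)
    (hεcont : ∀ z, Continuous (ε z))
    (hεlim : ∀ z, Tendsto (ε z) atTop (nhds 0))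
    (hF : ∀ z, ∀ y ≥ (1:ℝ),
      Fbar z y = c z * Real.exp (-(∫ u in (1:ℝ)..y, (1/γ z - ε z u) / u)))
    (κγ κε u₀ : ℝ) (hκγ : 0 < κγ) (hκε : 0 < κε)
    (hLε : ∀ z z' : E, ∀ u > u₀, |ε z u - ε z' u| ≤ κε * dist z z')
    (hLγ : ∀ z z' : E, |1/γ z - 1/γ z'| ≤ κγ * dist z z')
    -- the kernel Q' is a pdf supported on [-1,1], with cdf Q
    (Q' : ℝ → ℝ) (hQ'nonneg : ∀ t, 0 ≤ Q' t)
    (hQ'supp : ∀ t, t ∉ Set.Icc (-1:ℝ) 1 → Q' t = 0)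
    (hQ'int : ∫ t, Q' t = 1)
    (Q : ℝ → ℝ) (hQ : ∀ t, Q t = ∫ s in Set.Iic t, Q' s)
    (x : E) (y h lam : ℕ → ℝ)
    (hy : Tendsto y atTop atTop) (hh : Tendsto h atTop (nhds 0))
    (hlampos : ∀ n, 0 < lam n)
    (hlam : Tendsto (fun n => lam n / y n) atTop (nhds 0)) :
    (∀ n : ℕ, ∀ x' : E, ∀ W : Ω → ℝ, Measurable W →
      (∀ t : ℝ, (P {ω | t < W ω}).toReal = Fbar x' t) →
      ∫ ω, Q ((W ω - y n) / lam n) ∂P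
        = Fbar x' (y n) +
          ∫ u in (-1:ℝ)..1, Q' u * (Fbar x' (y n + lam n * u) - Fbar x' (y n))) ∧
    (∃ C > (0:ℝ), ∀ᶠ n in atTop, ∀ x' ∈ closedBall x (h n),
      |∫ u in (-1:ℝ)..1, Q' u * (Fbar x' (y n + lam n * u) / Fbar x' (y n) - 1)|
        ≤ C * (lam n / y n)) := by
  refine ⟨fun n x' W hW hWdist => ?_, ?_⟩
  · have hFbar : Fbar x' = fun t => P.real {ω | t < W ω} := funext fun t => (hWdist t).symm
    rw [hFbar]
    exact integral_kernel_cdf_comp_eq P hW hQ'supp hQ'int hQ (y n) (hlampos n)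
  · obtain ⟨C, hC, hratio⟩ := eventually_abs_div_sub_one_le hcpos hεcont hF hκγ.le hκε.le
      hLε hLγ (hεlim x) hy hh hlampos hlam
    have hQ'int11 : ∫ u in (-1:ℝ)..1, Q' u = 1 := by
      rw [← integral_eq_intervalIntegral_of_forall_compl_eq_zero (by norm_num) hQ'supp, hQ'int]
    have hQ'ii : IntervalIntegrable Q' volume (-1) 1 :=
      (Integrable.of_integral_ne_zero (by rw [hQ'int]; exact one_ne_zero)).intervalIntegrable
    refine ⟨C, hC, hratio.mono fun n hn x' hx' => ?_⟩
    simpa only [hQ'int11, mul_one] using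
      abs_intervalIntegral_mul_le (by norm_num) hQ'nonneg hQ'ii (hn x' hx')

theorem stmt_17 {E : Type*} [PseudoMetricSpace E]
    {Ω : Type*} [MeasurableSpace Ω] (P : Measure Ω) [IsProbabilityMeasure P]
    (c γ : E → ℝ) (ε : E → ℝ → ℝ) (Fbar : E → ℝ → ℝ)
    (hγpos : ∀ z, 0 < γ z) (hcpos : ∀ z, 0 < c z)
    (hεcont : ∀ z, Continuous (ε z))
    (hεlim : ∀ z, Tendsto (ε z) atTop (nhds 0))
    (hF : ∀ z, ∀ y ≥ (1:ℝ),
      Fbar z y = c z * Real.exp (-(∫ u in (1:ℝ)..y, (1/γ z - ε z u) / u)))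
    (κγ κε u₀ : ℝ) (hκγ : 0 < κγ) (hκε : 0 < κε) (hu₀ : 1 < u₀)
    (hLε : ∀ z z' : E, ∀ u > u₀, |ε z u - ε z' u| ≤ κε * dist z z')
    (hLγ : ∀ z z' : E, |1/γ z - 1/γ z'| ≤ κγ * dist z z')
    -- the kernel Q' is a pdf supported on [-1,1], with cdf Q
    (Q' : ℝ → ℝ) (hQ'nonneg : ∀ t, 0 ≤ Q' t)
    (hQ'supp : ∀ t, t ∉ Set.Icc (-1:ℝ) 1 → Q' t = 0)
    (hQ'meas : Measurable Q')
    (hQ'int : ∫ t, Q' t = 1)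
    (Q : ℝ → ℝ) (hQ : ∀ t, Q t = ∫ s in Set.Iic t, Q' s)
    (x : E) (y h lam : ℕ → ℝ)
    (hy : Tendsto y atTop atTop) (hh : Tendsto h atTop (nhds 0))
    (hlampos : ∀ n, 0 < lam n)
    (hlam : Tendsto (fun n => lam n / y n) atTop (nhds 0)) :
    (∀ n : ℕ, ∀ x' : E, ∀ W : Ω → ℝ, Measurable W →
      (∀ t : ℝ, (P {ω | t < W ω}).toReal = Fbar x' t) →
      ∫ ω, Q ((W ω - y n) / lam n) ∂P
        = Fbar x' (y n) +
          ∫ u in (-1:ℝ)..1, Q' u * (Fbar x' (y n + lam n * u) - Fbar x' (y n))) ∧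
    (∃ C > (0:ℝ), ∀ᶠ n in atTop, ∀ x' ∈ closedBall x (h n),
      |∫ u in (-1:ℝ)..1, Q' u * (Fbar x' (y n + lam n * u) / Fbar x' (y n) - 1)|
        ≤ C * (lam n / y n)) :=
  stmt_17_general P c γ ε Fbar hcpos hεcont hεlim hF κγ κε u₀ hκγ hκε hLε hLγ Q' hQ'nonneg hQ'supp
    hQ'int Q hQ x y h lam hy hh hlampos hlam
end
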